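/- Assume Hypothesis (HA). If β ∈ ℝ and f ∈ L^∞(M,μ;ℂ) satisfies P f = λ e^{iβ} f, then the pointwise modulus |f| is, as an element of L^∞(M,μ), a nonnegative scalar multiple of g. -/

import Mathlib

/-! Taking moduli in `P f = λ e^{iβ} f` gives `λ |f| ≤ P |f|` a.e. Integrating against `μ` and
using `P*μ = λμ` forces equality, so `|f|` lies in the one-dimensional `λ`-eigenspace:
`|f| = c g` a.e. The constant is nonnegative because `c g ≥ 0` a.e., `g` is continuous and
positive somewhere, and `μ` has full support. -/

open MeasureTheory ProbabilityTheory Filter Topology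

namespace QEM

noncomputable section

variable {M : Type*} [MetricSpace M] [CompactSpace M] [MeasurableSpace M] [BorelSpace M]

/-- The weighted Koopman operator on real-valued functions:
`P f (x) = e^{φ(x)} ∫ f(y) κ(x,dy)`. -/
def PR (φ : M → ℝ) (κ : Kernel M M) (f : M → ℝ) : M → ℝ :=
  fun x => Real.exp (φ x) * ∫ y, f y ∂(κ x)

/-- The weighted Koopman operator on complex-valued functions
(`P f := P(Re f) + i P(Im f)`, equivalently with the complex Bochner integral). -/
def PC (φ : M → ℝ) (κ : Kernel M M) (f : M → ℂ) : M → ℂ :=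
  fun x => (Real.exp (φ x) : ℂ) * ∫ y, f y ∂(κ x)

/-- Bounded measurable real-valued functions. -/
def BddMeas (f : M → ℝ) : Prop := Measurable f ∧ ∃ C : ℝ, ∀ x, |f x| ≤ C

/-- Bounded measurable complex-valued functions. -/
def BddMeasC (f : M → ℂ) : Prop := Measurable f ∧ ∃ C : ℝ, ∀ x, ‖f x‖ ≤ C

/-- The operator `P_g f := P (1_{g>0} · f)`. -/
def Pg (φ : M → ℝ) (κ : Kernel M M) (g : M → ℝ) : (M → ℝ) → (M → ℝ) :=
  fun f => PR φ κ (Set.indicator {x | 0 < g x} f)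

/-- Complex version of `P_g`. -/
def PgC (φ : M → ℝ) (κ : Kernel M M) (g : M → ℝ) : (M → ℂ) → (M → ℂ) :=
  fun f => PC φ κ (Set.indicator {x | 0 < g x} f)

/-- The indicator function of `{g > 0}`. -/
def oneG (g : M → ℝ) : M → ℝ := Set.indicator {x | 0 < g x} (fun _ => (1 : ℝ))

/-- The normalized restriction `μ̃` of `μ` to `{g > 0}`, i.e.
`μ̃(A) = μ(A ∩ {g>0}) / μ({g>0})`. -/
def mtilde (μ : Measure M) (g : M → ℝ) : Measure M :=
  (μ {x | 0 < g x})⁻¹ • μ.restrict {x | 0 < g x}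

/-- The root-of-unity phase `e^{2πi j/k}`. -/
def rootU (k j : ℕ) : ℂ := Complex.exp (2 * (Real.pi : ℂ) * Complex.I * (j : ℂ) / (k : ℂ))

/-- Basic standing setup: `μ` is a fully supported Borel probability measure, `κ` a
sub-Markov kernel with `κ(x,·) ≪ μ` for all `x`, and `φ` a (bounded) continuous function. -/
structure Setup (μ : Measure M) (κ : Kernel M M) (φ : M → ℝ) : Prop where
  prob : IsProbabilityMeasure μ
  fullSupp : ∀ U : Set M, IsOpen U → U.Nonempty → 0 < μ U
  subMarkov : ∀ x, κ x Set.univ ≤ 1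
  ac : ∀ x, κ x ≪ μ
  contφ : Continuous φ

/-- Hypothesis (HA): (i) `P` is strong Feller; (ii) `lam > 0` equals the spectral radius of the
induced operator `T` on `L^∞(M,μ;ℂ)` (where `T` agrees a.e. with the pointwise operator `P` on
bounded measurable representatives); (iii) the eigenspace of `P` at `lam` in `L^∞(M,μ)` is
one-dimensional, spanned by a continuous nonnegative `g ≢ 0` with `P g = lam·g` and
`∫ g dμ = μ {g>0}`; (iv) `P^*μ = lam·μ`. -/
structure HypHA (μ : Measure M) (κ : Kernel M M) (φ : M → ℝ)
    (T : Lp ℂ ⊤ μ →L[ℂ] Lp ℂ ⊤ μ) (lam : ℝ) (g : M → ℝ) : Prop where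
  setup : Setup μ κ φ
  strongFeller : ∀ f : M → ℝ, BddMeas f → Continuous (PR φ κ f)
  lam_pos : 0 < lam
  Tcompat : ∀ f : M → ℂ, BddMeasC f → ∀ F : Lp ℂ ⊤ μ, ⇑F =ᵐ[μ] f →
      ⇑(T F) =ᵐ[μ] PC φ κ f
  specRad : spectralRadius ℂ T = ENNReal.ofReal lam
  g_cont : Continuous g
  g_nonneg : ∀ x, 0 ≤ g x
  g_ne : g ≠ 0
  g_eigen : PR φ κ g = fun x => lam * g x
  g_int : ∫ x, g x ∂μ = (μ {x | 0 < g x}).toReal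
  eigen_dim : ∀ f : M → ℝ, BddMeas f → PR φ κ f =ᵐ[μ] (fun x => lam * f x) →
      ∃ c : ℝ, f =ᵐ[μ] fun x => c * g x
  Pstar : ∀ f : M → ℝ, BddMeas f → ∫ x, PR φ κ f x ∂μ = lam * ∫ x, f x ∂μ

/-- Membership in the point peripheral spectrum `σ_per(P)`:
`|α| = lam` and `P f = α f` for some nonzero `f ∈ L^∞(M,μ;ℂ)`. -/
def PerSpec (μ : Measure M) (κ : Kernel M M) (φ : M → ℝ) (lam : ℝ) (α : ℂ) : Prop :=
  ‖α‖ = lam ∧ ∃ f : M → ℂ, BddMeasC f ∧ ¬ (f =ᵐ[μ] 0) ∧ PC φ κ f =ᵐ[μ] fun x => α * f x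

/-- `σ_per(P) = {lam·e^{2πi j/k} : j = 0, …, k-1}`. -/
def PerSpecEq (μ : Measure M) (κ : Kernel M M) (φ : M → ℝ) (lam : ℝ) (k : ℕ) : Prop :=
  ∀ α : ℂ, PerSpec μ κ φ lam α ↔ ∃ j : ℕ, j < k ∧ α = (lam : ℂ) * rootU k j

/-- A family of `k` linearly independent, nonnegative, continuous functions with pairwise
disjoint supports, spanning `ker(P^k - lam^k)` in `L^∞(M,μ;ℂ)`, each of integral `μ {g>0}`. -/
structure PreFamily (μ : Measure M) (κ : Kernel M M) (φ : M → ℝ) (lam : ℝ) (g : M → ℝ)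
    (k : ℕ) (gi : Fin k → M → ℝ) : Prop where
  cont : ∀ i, Continuous (gi i)
  nonneg : ∀ i x, 0 ≤ gi i x
  indep : LinearIndependent ℝ gi
  span_ker : ∀ f : M → ℂ, BddMeasC f →
      (((PC φ κ)^[k] f) =ᵐ[μ] fun x => (lam : ℂ) ^ k * f x) ↔
        ∃ c : Fin k → ℂ, f =ᵐ[μ] fun x => ∑ i, c i * (gi i x : ℂ)
  integral : ∀ i, ∫ x, gi i x ∂μ = (μ {x | 0 < g x}).toReal
  disj : ∀ i j, i ≠ j → ∀ x, ¬ (0 < gi i x ∧ 0 < gi j x)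

/-- The cyclic family hypothesis: nonnegative continuous `g_0, …, g_{k-1}` supported in `{g>0}`
with pairwise disjoint supports, spanning `ker(P^k - lam^k)` in `L^∞(M,μ;ℂ)`, with
`∫ g_i dμ = μ {g>0}`, `P g_i = lam·g_{i-1 (mod k)}` and `g = (1/k) ∑ g_i`. -/
structure CyclicFamily (μ : Measure M) (κ : Kernel M M) (φ : M → ℝ) (lam : ℝ) (g : M → ℝ)
    (k : ℕ) [NeZero k] (gi : Fin k → M → ℝ) : Prop where
  cont : ∀ i, Continuous (gi i)
  nonneg : ∀ i x, 0 ≤ gi i x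
  supported : ∀ i x, 0 < gi i x → 0 < g x
  disj : ∀ i j, i ≠ j → ∀ x, ¬ (0 < gi i x ∧ 0 < gi j x)
  span_ker : ∀ f : M → ℂ, BddMeasC f →
      (((PC φ κ)^[k] f) =ᵐ[μ] fun x => (lam : ℂ) ^ k * f x) ↔
        ∃ c : Fin k → ℂ, f =ᵐ[μ] fun x => ∑ i, c i * (gi i x : ℂ)
  integral : ∀ i, ∫ x, gi i x ∂μ = (μ {x | 0 < g x}).toReal
  cycle : ∀ i : Fin k, PR φ κ (gi i) = fun x => lam * gi (i - 1) x
  avg : g = fun x => (1 / (k : ℝ)) * ∑ i, gi i x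

/-- The spectral decomposition hypothesis: a closed `P_g`-invariant subspace `V` of
`L^∞({g>0},μ;ℂ)` with `L^∞({g>0},μ;ℂ) = span{g_0,…,g_{k-1}} ⊕ V` and such that the spectral
radius of `P_g` restricted to `V` is `< lam` (expressed through a geometric bound on the
iterates, via Gelfand's formula). -/
structure SpecDecomp (μ : Measure M) (κ : Kernel M M) (φ : M → ℝ) (lam : ℝ) (g : M → ℝ)
    (k : ℕ) (gi : Fin k → M → ℝ) (V : Submodule ℂ (M → ℂ)) : Prop where
  meas : ∀ v ∈ V, Measurable v
  bdd : ∀ v ∈ V, ∃ C : ℝ, ∀ x, ‖v x‖ ≤ C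
  supp : ∀ v ∈ V, ∀ x, ¬ 0 < g x → v x = 0
  invariant : ∀ v ∈ V, PgC φ κ g v ∈ V
  closed : ∀ (u : ℕ → M → ℂ) (f : M → ℂ), (∀ n, u n ∈ V) → Measurable f →
      (∃ C : ℝ, ∀ x, ‖f x‖ ≤ C) → (∀ x, ¬ 0 < g x → f x = 0) →
      Tendsto (fun n => eLpNorm (u n - f) ⊤ μ) atTop (nhds 0) → f ∈ V
  decomp : ∀ f : M → ℂ, BddMeasC f → (∀ x, ¬ 0 < g x → f x = 0) →
      ∃ c : Fin k → ℂ, ∃ v ∈ V, f = fun x => (∑ i, c i * (gi i x : ℂ)) + v x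
  unique : ∀ c : Fin k → ℂ, (fun x => ∑ i, c i * (gi i x : ℂ)) ∈ V → c = 0
  gap : ∃ r : ℝ, 0 ≤ r ∧ r < lam ∧ ∃ C : ℝ, ∀ n : ℕ, ∀ v ∈ V,
      eLpNorm ((PgC φ κ g)^[n] v) ⊤ μ ≤ ENNReal.ofReal (C * r ^ n) * eLpNorm v ⊤ μ

/-- The operator `P^{k+1} - lam^{k+1}` on complex-valued functions. -/
def Qop (φ : M → ℝ) (κ : Kernel M M) (lam : ℝ) (k : ℕ) : (M → ℂ) → (M → ℂ) :=
  fun h x => (PC φ κ)^[k + 1] h x - (lam : ℂ) ^ (k + 1) * h x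

section General

variable {X : Type*} [MeasurableSpace X]

theorem norm_PC_le_PR_norm (φ : X → ℝ) (κ : Kernel X X) (f : X → ℂ) (x : X) :
    ‖PC φ κ f x‖ ≤ PR φ κ (fun y => ‖f y‖) x := by
  rw [PC, PR, norm_mul, Complex.norm_real, Real.norm_of_nonneg (Real.exp_pos _).le]
  exact mul_le_mul_of_nonneg_left (norm_integral_le_integral_norm _) (Real.exp_pos _).le

theorem ae_mul_norm_le_PR_norm_of_eigen {μ : Measure X} {κ : Kernel X X} {φ : X → ℝ}
    {lam : ℝ} (hlam : 0 ≤ lam) {β : ℝ} {f : X → ℂ}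
    (heig : PC φ κ f =ᵐ[μ] fun x => (lam : ℂ) * Complex.exp (Complex.I * β) * f x) :
    (fun x => lam * ‖f x‖) ≤ᵐ[μ] PR φ κ (fun y => ‖f y‖) := by
  filter_upwards [heig] with x hx
  have hnorm : ‖PC φ κ f x‖ = lam * ‖f x‖ := by
    rw [hx, norm_mul, norm_mul, Complex.norm_exp_I_mul_ofReal, Complex.norm_real,
      Real.norm_of_nonneg hlam, mul_one]
  exact hnorm ▸ norm_PC_le_PR_norm φ κ f x

theorem BddMeasC.norm {f : X → ℂ} (hf : BddMeasC f) : BddMeas fun x => ‖f x‖ := by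
  obtain ⟨hfm, C, hC⟩ := hf
  exact ⟨hfm.norm, C, fun x => by simpa using hC x⟩

theorem BddMeas.integrable {μ : Measure X} [IsFiniteMeasure μ] {f : X → ℝ} (hf : BddMeas f) :
    Integrable f μ := by
  obtain ⟨hfm, C, hC⟩ := hf
  exact Integrable.of_bound hfm.aestronglyMeasurable C (Eventually.of_forall hC)

variable [TopologicalSpace X] {μ : Measure X}

theorem nonneg_of_ae_nonneg_mul [μ.IsOpenPosMeasure] {g : X → ℝ} (hg : Continuous g) {x₀ : X}
    (hx₀ : 0 < g x₀) {c : ℝ} (h : ∀ᵐ x ∂μ, 0 ≤ c * g x) : 0 ≤ c := by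
  have hclosed : IsClosed {x | 0 ≤ c * g x} := isClosed_le continuous_const (hg.const_smul c)
  have hall : {x | 0 ≤ c * g x} = Set.univ := by
    rw [← hclosed.closure_eq, (μ.dense_of_ae h).closure_eq]
  exact nonneg_of_mul_nonneg_left (Set.eq_univ_iff_forall.mp hall x₀) hx₀

end General

section Metric

variable {X : Type*} [MetricSpace X] [MeasurableSpace X] {μ : Measure X} {κ : Kernel X X}
  {φ : X → ℝ}

theorem Setup.isOpenPosMeasure (h : Setup μ κ φ) : μ.IsOpenPosMeasure :=
  ⟨fun U hU hne => (h.fullSupp U hU hne).ne'⟩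

theorem HypHA.exists_g_pos {T : Lp ℂ ⊤ μ →L[ℂ] Lp ℂ ⊤ μ} {lam : ℝ} {g : X → ℝ}
    (hHA : HypHA μ κ φ T lam g) : ∃ x, 0 < g x := by
  by_contra! h
  exact hHA.g_ne (funext fun x => le_antisymm (h x) (hHA.g_nonneg x))

end Metric

namespace HypHA

variable {μ : Measure M} {κ : Kernel M M} {φ : M → ℝ} {T : Lp ℂ ⊤ μ →L[ℂ] Lp ℂ ⊤ μ}
  {lam : ℝ} {g : M → ℝ}

/-- Since `P*μ = λμ`, the functions `λ h` and `P h` have the same integral, so an a.e. inequality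
between them is an a.e. equality. -/
theorem PR_ae_eq_of_ae_le (hHA : HypHA μ κ φ T lam g) {h : M → ℝ} (hh : BddMeas h)
    (hle : (fun x => lam * h x) ≤ᵐ[μ] PR φ κ h) : PR φ κ h =ᵐ[μ] fun x => lam * h x := by
  have := hHA.setup.prob
  have hPh : BddMeas (PR φ κ h) := by
    have hcont := hHA.strongFeller h hh
    obtain ⟨C, hC⟩ := isCompact_univ.exists_bound_of_continuousOn hcont.continuousOn
    exact ⟨hcont.measurable, C, fun x => hC x (Set.mem_univ x)⟩
  have hint : ∫ x, lam * h x ∂μ = ∫ x, PR φ κ h x ∂μ := by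
    rw [integral_const_mul, hHA.Pstar h hh]
  exact ((integral_eq_iff_of_ae_le (hh.integrable.const_mul lam) hPh.integrable hle).mp
    hint).symm

end HypHA

/-- **Step 1 of Lemma A.2.** Under Hypothesis (HA), if
`P f = lam e^{iβ} f` in `L^∞(M,μ;ℂ)`, then `|f|` is (a.e.) a nonnegative multiple of `g`. -/
theorem statement12 (μ : Measure M) (κ : Kernel M M) (φ : M → ℝ)
    (T : Lp ℂ ⊤ μ →L[ℂ] Lp ℂ ⊤ μ) (lam : ℝ) (g : M → ℝ)
    (hHA : HypHA μ κ φ T lam g)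
    (β : ℝ) (f : M → ℂ) (hf : BddMeasC f)
    (heig : PC φ κ f =ᵐ[μ] fun x => (lam : ℂ) * Complex.exp (Complex.I * β) * f x) :
    ∃ c : ℝ, 0 ≤ c ∧ (fun x => ‖f x‖) =ᵐ[μ] fun x => c * g x := by
  have hmod_eigen : PR φ κ (fun y => ‖f y‖) =ᵐ[μ] fun x => lam * ‖f x‖ :=
    hHA.PR_ae_eq_of_ae_le hf.norm (ae_mul_norm_le_PR_norm_of_eigen hHA.lam_pos.le heig)
  obtain ⟨c, hc⟩ := hHA.eigen_dim _ hf.norm hmod_eigen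
  refine ⟨c, ?_, hc⟩
  have := hHA.setup.isOpenPosMeasure
  obtain ⟨x₀, hx₀⟩ := hHA.exists_g_pos
  exact nonneg_of_ae_nonneg_mul hHA.g_cont hx₀ 
    (hc.mono fun x hx => (norm_nonneg (f x)).trans_eq hx)

end

end QEM
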